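/- With the monomial law f(Λ) = (Λ−1)^p (p > 0), the crack-tip slope for a periodic entangled network with φ_s = 50%, k_e = (h₀/(α·l₀·2^p·(p+1)))^{1/(p+1)}, solves h₀·∫_1^{λ_c} ((λ+1)/2 − 1)^p dλ = α·l₀·(Λ_f − 1)^{p+1} with λ_c = (Λ_f − 1)/k_e + 1 for every Λ_f > 1; moreover k_e < k_s = (h₀/(α·l₀·(p+1)))^{1/(p+1)} for all p > 0. -/

import Mathlib

open Real

/-- Scaling-law identity for the periodic entangled network (`φ_s = 50%`) with
monomial constitutive law, and `k_e < k_s`. -/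
theorem crack_tip_slope_entangled (p h₀ α l₀ : ℝ) (hp : 0 < p)
    (hh₀ : 0 < h₀) (hα : 0 < α) (hl₀ : 0 < l₀) :
    (∀ Λf : ℝ, 1 < Λf →
      h₀ * (∫ s in (1:ℝ)..((Λf - 1) /
            ((h₀ / (α * l₀ * 2 ^ p * (p + 1))) ^ (1 / (p + 1))) + 1),
          ((s + 1) / 2 - 1) ^ p) = α * l₀ * (Λf - 1) ^ (p + 1)) ∧
    (h₀ / (α * l₀ * 2 ^ p * (p + 1))) ^ (1 / (p + 1)) <
      (h₀ / (α * l₀ * (p + 1))) ^ (1 / (p + 1)) := by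
  have h2p : (0:ℝ) < 2 ^ p := rpow_pos_of_pos two_pos p
  have hp1 : (0:ℝ) < p + 1 := by linarith
  have hbase : (0:ℝ) < h₀ / (α * l₀ * 2 ^ p * (p + 1)) := by positivity
  set b := h₀ / (α * l₀ * 2 ^ p * (p + 1)) with hb
  set k := b ^ (1 / (p + 1)) with hk
  have hkpos : 0 < k := rpow_pos_of_pos hbase _
  have hkpow : k ^ (p + 1) = b := by
    rw [hk, ← rpow_mul hbase.le, one_div, inv_mul_cancel₀ hp1.ne', rpow_one]
  constructor
  · intro Λf hΛf
    set c := (Λf - 1) / k + 1 with hc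
    have key : (∫ s in (1:ℝ)..c, ((s + 1) / 2 - 1) ^ p)
        = ((c - 1) / 2) ^ (p + 1) * (2 / (p + 1)) := by
      have hFT := intervalIntegral.integral_eq_sub_of_hasDerivAt
        (f := fun x => ((x - 1) / 2) ^ (p + 1) * (2 / (p + 1)))
        (f' := fun x => ((x + 1) / 2 - 1) ^ p) (a := 1) (b := c)
        (fun x _ => by
          have hin : HasDerivAt (fun x : ℝ => (x - 1) / 2) (1 / 2) x :=
            ((hasDerivAt_id x).sub_const 1).div_const 2
          have h1 : HasDerivAt (fun x : ℝ => ((x - 1) / 2) ^ (p + 1))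
              ((p + 1) * ((x - 1) / 2) ^ (p + 1 - 1) * (1 / 2)) x :=
            (Real.hasDerivAt_rpow_const (Or.inr (by linarith))).comp x hin
          have h2 := h1.mul_const (2 / (p + 1))
          convert h2 using 1
          · rfl
          have : p + 1 - 1 = p := by ring
          rw [this]
          have e : (x + 1) / 2 - 1 = (x - 1) / 2 := by ring
          simp only [e]
          field_simp)
        (by
          apply Continuous.intervalIntegrable
          have : Continuous fun x : ℝ => (x + 1) / 2 - 1 := by continuity
          exact this.rpow_const (fun x => Or.inr hp.le))
      rw [hFT]
      norm_num [Real.zero_rpow hp1.ne']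
    rw [key]
    have hΛ : (0:ℝ) ≤ Λf - 1 := by linarith
    have hc1 : c - 1 = (Λf - 1) / k := by rw [hc]; ring
    rw [hc1, div_div]
    rw [div_rpow hΛ (by positivity), mul_rpow hkpos.le (by norm_num), hkpow,
      rpow_add two_pos p 1, rpow_one, hb]
    field_simp
  · apply rpow_lt_rpow hbase.le _ (by positivity)
    apply div_lt_div_of_pos_left hh₀ (by positivity)
    have h1 : (1:ℝ) < 2 ^ p := by
      nth_rewrite 1 [show (1:ℝ) = 2 ^ (0:ℝ) by norm_num]
      exact rpow_lt_rpow_left_iff one_lt_two |>.mpr hp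
    nlinarith [mul_pos (mul_pos hα hl₀) hp1]
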